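/- arXiv:1405.5797 — 2 statements merged into one kernel-verified Lean document; each statement's English description precedes it below -/
import Mathlib

section
/- Let A > 0, set p = −4·A⁴/3, and define ψ : ℝ × ℝ → ℝ by ψ(t,x) = A·(sech(x − p·t))^{1/2} (real power of the positive number sech(x − p·t)). Then ψ satisfies the flow equation ∂_t(−ψ_{xx}/ψ) = ∂_x(ψ⁴) at every point (t,x) ∈ ℝ²; equivalently, ∂_x(ψ⁴) + ∂_t(ψ_{xx}/ψ) = 0. Hence this equation admits the solitonic solution A·sech^{1/2}(x − p·t) with speed of propagation p = −4·A⁴/3. -/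
/-!
`ψ` is the travelling wave `g (x - p t)` with profile `g = A · cosh^(-1/2)`, so `∂ₓ` and `∂ₜ`
act on it as `d/dy` and `-p · d/dy` on the profile. Since
`(cosh^r)'' = r² cosh^r - r (r - 1) cosh^(r-2)`, the quotient `-ψₓₓ/ψ` is the travelling wave
`3/4 · cosh⁻² - 1/4`, while `ψ⁴ = A⁴ cosh⁻²`. Both sides of the equation are then multiples of
`cosh⁻³ · sinh`, with coefficients `3p/2` and `-2A⁴`, which agree exactly when `p = -4A⁴/3`.
-/

/-- Partial derivative in the second (space) variable. -/
noncomputable def pdx (u : ℝ → ℝ → ℝ) : ℝ → ℝ → ℝ :=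
  fun t x => deriv (fun y => u t y) x

/-- Partial derivative in the first (time) variable. -/
noncomputable def pdt (u : ℝ → ℝ → ℝ) : ℝ → ℝ → ℝ :=
  fun t x => deriv (fun s => u s x) t

open Real

section TravellingWave

variable (g : ℝ → ℝ) (p : ℝ)

lemma pdx_travellingWave :
    pdx (fun t x => g (x - p * t)) = fun t x => deriv g (x - p * t) :=
  funext₂ fun _ _ => deriv_comp_sub_const ..

lemma pdt_travellingWave {t x : ℝ} (hg : DifferentiableAt ℝ g (x - p * t)) :
    pdt (fun t x => g (x - p * t)) t x = -p * deriv g (x - p * t) := by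
  have hphase : HasDerivAt (fun s => x - p * s) (-p) t := by
    simpa using ((hasDerivAt_id t).const_mul p).const_sub x
  rw [pdt, mul_comm]
  exact (hg.hasDerivAt.comp t hphase).deriv

end TravellingWave

lemma hasDerivAt_cosh_rpow (r y : ℝ) :
    HasDerivAt (fun y => cosh y ^ r) (r * cosh y ^ (r - 1) * sinh y) y := by
  convert (hasDerivAt_cosh y).rpow_const (p := r) (Or.inl (cosh_pos y).ne') using 1
  ring

lemma deriv_cosh_rpow (r : ℝ) :
    deriv (fun y => cosh y ^ r) = fun y => r * cosh y ^ (r - 1) * sinh y :=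
  funext fun y => (hasDerivAt_cosh_rpow r y).deriv

lemma deriv_deriv_cosh_rpow (r y : ℝ) :
    deriv (deriv fun y => cosh y ^ r) y
      = r ^ 2 * cosh y ^ r - r * (r - 1) * cosh y ^ (r - 2) := by
  have hc := cosh_pos y
  have h : HasDerivAt (fun y => r * cosh y ^ (r - 1) * sinh y)
      (r * ((r - 1) * cosh y ^ (r - 1 - 1) * sinh y) * sinh y + r * cosh y ^ (r - 1) * cosh y) y :=
    ((hasDerivAt_cosh_rpow (r - 1) y).const_mul r).mul (hasDerivAt_sinh y)
  rw [deriv_cosh_rpow, h.deriv, show r - 1 - 1 = r - 2 by ring,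
    rpow_sub_one hc.ne', rpow_sub hc, rpow_two]
  field_simp
  rw [sinh_sq]
  ring

lemma one_div_cosh_rpow_half (y : ℝ) : (1 / cosh y) ^ ((1 : ℝ) / 2) = cosh y ^ (-(1 / 2) : ℝ) := by
  rw [one_div, inv_rpow (cosh_pos y).le, rpow_neg (cosh_pos y).le]

lemma neg_deriv_deriv_div_const_mul_cosh_rpow {A : ℝ} (hA : A ≠ 0) (r y : ℝ) :
    -deriv (deriv fun y => A * cosh y ^ r) y / (A * cosh y ^ r)
      = r * (r - 1) * cosh y ^ (-2 : ℝ) - r ^ 2 := by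
  have hc := cosh_pos y
  rw [deriv_const_mul_field', deriv_const_mul_field, deriv_deriv_cosh_rpow,
    show r - 2 = r + -2 by ring, rpow_add hc]
  field_simp
  ring

/-- for `A > 0`, `p = −4·A⁴/3`, the function
`ψ(t,x) = A·(sech(x − p·t))^(1/2)` solves the flow equation
`∂_t(−ψ_{xx}/ψ) = ∂_x(ψ⁴)` everywhere; it is a solitonic solution with speed `p`. -/
theorem stmt_10 (A p : ℝ) (hA : 0 < A) (hp : p = -4 * A ^ 4 / 3)
    (ψ : ℝ → ℝ → ℝ)
    (hψ : ψ = fun t x => A * (1 / Real.cosh (x - p * t)) ^ ((1 : ℝ) / 2)) :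
    ∀ t x : ℝ,
      pdt (fun t x => -(pdx (pdx ψ) t x) / ψ t x) t x
        = pdx (fun t x => (ψ t x) ^ 4) t x := by
  intro t x
  set profile : ℝ → ℝ := fun y => A * cosh y ^ (-(1 / 2) : ℝ)
  have hψ' : ψ = fun t x => profile (x - p * t) := by
    simp only [hψ, profile, one_div_cosh_rpow_half]
  have hratio : (fun t x => -(pdx (pdx ψ) t x) / ψ t x)
      = fun t x => 3 / 4 * cosh (x - p * t) ^ (-2 : ℝ) - 1 / 4 := by
    funext t x
    rw [hψ', pdx_travellingWave, pdx_travellingWave (deriv profile),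
      neg_deriv_deriv_div_const_mul_cosh_rpow hA.ne']
    norm_num
  have hpower : (fun t x => ψ t x ^ 4) = fun t x => A ^ 4 * cosh (x - p * t) ^ (-2 : ℝ) := by
    funext t x
    rw [hψ', mul_pow, ← rpow_mul_natCast (cosh_pos _).le]
    norm_num
  have hdiff : HasDerivAt (fun y => 3 / 4 * cosh y ^ (-2 : ℝ) - 1 / 4)
      (3 / 4 * (-2 * cosh (x - p * t) ^ (-2 - 1 : ℝ) * sinh (x - p * t))) (x - p * t) :=
    ((hasDerivAt_cosh_rpow _ _).const_mul _).sub_const _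
  rw [hratio, hpower, pdt_travellingWave _ _ hdiff.differentiableAt, hdiff.deriv,
    pdx_travellingWave (fun y => A ^ 4 * cosh y ^ (-2 : ℝ)), deriv_const_mul_field',
    deriv_cosh_rpow, hp]
  ring
end

section
/- For every p ∈ ℝ, the function u : ℝ × ℝ → ℝ defined by u(t,x) = 2·sech²(x − p·t) satisfies the Fuchssteiner negative KdV equation ∂_x(u_{txx}/u_x) + 4·∂_x(u·u_t/u_x) + 2·u_t = 0 at every point (t,x) with x ≠ p·t (at such points u_x(t,x) ≠ 0). Hence the Fuchssteiner equation admits the solitonic solution 2·sech²(x − p·t). -/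
/-- The Fuchssteiner negative KdV equation
`∂_x(u_{txx}/u_x) + 4·∂_x(u·u_t/u_x) + 2·u_t = 0` at the point `(t, x)`. -/
def FuchssteinerEq (u : ℝ → ℝ → ℝ) (t x : ℝ) : Prop :=
  pdx (fun t x => pdx (pdx (pdt u)) t x / pdx u t x) t x
    + 4 * pdx (fun t x => u t x * pdt u t x / pdx u t x) t x
    + 2 * pdt u t x = 0

open Real Filter

def travelingWave (p : ℝ) (g : ℝ → ℝ) : ℝ → ℝ → ℝ :=
  fun t x => g (x - p * t)

section TravelingWave

variable (p : ℝ) (g : ℝ → ℝ)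

theorem pdx_travelingWave : pdx (travelingWave p g) = travelingWave p (deriv g) := by
  funext t x
  exact deriv_comp_sub_const ..

theorem pdt_travelingWave :
    pdt (travelingWave p g) = travelingWave p (fun z => -p * deriv g z) := by
  funext t x
  have h := deriv_comp_mul_left p (fun y => g (x - y)) t
  simp only [smul_eq_mul, deriv_comp_const_sub] at h
  simpa [pdt, travelingWave, mul_comm p] using h

end TravelingWave

theorem deriv_mul_div_cancel_right {g h : ℝ → ℝ} {z : ℝ} (hh : ContinuousAt h z) (hz : h z ≠ 0) :
    deriv (fun y => g y * h y / h y) z = deriv g z := by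
  refine EventuallyEq.deriv_eq ?_
  filter_upwards [hh.eventually_ne hz] with y hy
  exact mul_div_cancel_right₀ _ hy

section Profile

variable {f : ℝ → ℝ} {c : ℝ}

theorem deriv_deriv_deriv_of_ode (hf : Differentiable ℝ f)
    (hode : ∀ z, deriv (deriv f) z = c * f z - 3 * f z ^ 2) :
    deriv (deriv (deriv f)) = fun z => (c - 6 * f z) * deriv f z := by
  funext z
  have h := ((hf z).hasDerivAt.const_mul c).fun_sub (((hf z).hasDerivAt.fun_pow 2).const_mul 3)
  rw [show deriv (deriv f) = fun z => c * f z - 3 * f z ^ 2 from funext hode, h.deriv]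
  ring

theorem fuchssteinerEq_travelingWave (hf : Differentiable ℝ f) (hf' : Differentiable ℝ (deriv f))
    (hode : ∀ z, deriv (deriv f) z = c * f z - 3 * f z ^ 2) {p t x : ℝ}
    (hx : deriv f (x - p * t) ≠ 0) : FuchssteinerEq (travelingWave p f) t x := by
  have hdisp : (fun t x => pdx (pdx (pdt (travelingWave p f))) t x / pdx (travelingWave p f) t x)
      = travelingWave p (fun z => -p * (c - 6 * f z) * deriv f z / deriv f z) := by
    simp only [pdt_travelingWave, pdx_travelingWave, deriv_const_mul_field',
      deriv_deriv_deriv_of_ode hf hode]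
    funext t x
    simp only [travelingWave, mul_assoc]
  have hnonlin : (fun t x => travelingWave p f t x * pdt (travelingWave p f) t x
      / pdx (travelingWave p f) t x)
      = travelingWave p (fun z => -p * f z * deriv f z / deriv f z) := by
    rw [pdt_travelingWave, pdx_travelingWave]
    funext t x
    simp only [travelingWave]
    ring
  have hcont : ContinuousAt (deriv f) (x - p * t) := hf'.continuous.continuousAt
  have hlin : HasDerivAt (fun z => -p * (c - 6 * f z)) (-p * (-(6 * deriv f (x - p * t))))
      (x - p * t) := (((hf _).hasDerivAt.const_mul 6).const_sub c).const_mul (-p)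
  unfold FuchssteinerEq
  rw [hdisp, hnonlin, pdx_travelingWave, pdx_travelingWave, pdt_travelingWave]
  simp only [travelingWave]
  rw [deriv_mul_div_cancel_right hcont hx, deriv_mul_div_cancel_right hcont hx, hlin.deriv,
    deriv_const_mul_field']
  ring

end Profile

noncomputable def soliton (z : ℝ) : ℝ := 2 * (1 / cosh z) ^ 2

theorem hasDerivAt_soliton (z : ℝ) : HasDerivAt soliton (-4 * sinh z / cosh z ^ 3) z := by
  have h := (((hasDerivAt_cosh z).fun_inv (cosh_pos z).ne').fun_pow 2).const_mul 2
  unfold soliton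
  simp only [one_div]
  refine h.congr_deriv ?_
  have hc := (cosh_pos z).ne'
  norm_num
  field_simp
  ring

theorem deriv_soliton : deriv soliton = fun z => -4 * sinh z / cosh z ^ 3 :=
  funext fun z => (hasDerivAt_soliton z).deriv

theorem hasDerivAt_deriv_soliton (z : ℝ) :
    HasDerivAt (deriv soliton) (4 * soliton z - 3 * soliton z ^ 2) z := by
  have h := (((hasDerivAt_sinh z).const_mul (-4)).fun_div ((hasDerivAt_cosh z).fun_pow 3)
    (pow_ne_zero 3 (cosh_pos z).ne'))
  rw [deriv_soliton]
  refine h.congr_deriv ?_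
  have hc := (cosh_pos z).ne'
  simp only [soliton]
  field_simp
  linear_combination (-12 * cosh z ^ 2) * cosh_sq z

theorem deriv_soliton_ne_zero {z : ℝ} (hz : z ≠ 0) : deriv soliton z ≠ 0 := by
  rw [deriv_soliton]
  exact div_ne_zero (mul_ne_zero (by norm_num) (sinh_ne_zero.mpr hz))
    (pow_ne_zero 3 (cosh_pos z).ne')

/-- for every `p`, the function `u(t,x) = 2·sech²(x − p·t)` satisfies the
Fuchssteiner negative KdV equation at every point with `x ≠ p·t`, where moreover
`u_x(t,x) ≠ 0`; it is a solitonic solution. -/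
theorem stmt_11 (p : ℝ) (u : ℝ → ℝ → ℝ)
    (hu : u = fun t x => 2 * (1 / Real.cosh (x - p * t)) ^ 2) :
    ∀ t x : ℝ, x ≠ p * t → pdx u t x ≠ 0 ∧ FuchssteinerEq u t x := by
  intro t x hx
  have hne : deriv soliton (x - p * t) ≠ 0 := deriv_soliton_ne_zero (sub_ne_zero.mpr hx)
  obtain rfl : u = travelingWave p soliton := hu
  refine ⟨by rwa [pdx_travelingWave], ?_⟩
  exact fuchssteinerEq_travelingWave (fun z => (hasDerivAt_soliton z).differentiableAt)
    (fun z => (hasDerivAt_deriv_soliton z).differentiableAt)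
    (fun z => (hasDerivAt_deriv_soliton z).deriv) hne
end
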